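/- arXiv:2202.12770 — 4 statements merged into one kernel-verified Lean document; each statement's English description precedes it below -/
import Mathlib

section
/- Fix T > 0, an integer d ≥ 1, and real numbers β₁, …, β_d. Let Q be a d×d substochastic matrix with zero diagonal and Qⁿ → 0, and let ψ and φ be the associated regulator and content maps. Then the reflection map R = (φ, ψ) is Lipschitz continuous on ∏_{i=1}^d D^{β_i}[0,T] with respect to the product J₁ distance: there exists a constant C < ∞ such that for all ξ = (ξ⁽¹⁾,…,ξ⁽ᵈ⁾) and ζ = (ζ⁽¹⁾,…,ζ⁽ᵈ⁾) with ξ⁽ⁱ⁾, ζ⁽ⁱ⁾ ∈ D^{β_i}[0,T] for each i, one has d_p(φ(ξ), φ(ζ)) + d_p(ψ(ξ), ψ(ζ)) ≤ C · d_p(ξ, ζ). -/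
open Set Filter

noncomputable section

/-- `f` is càdlàg on `[0,T]`: right-continuous on `[0,T)` and with left limits on `(0,T]`. -/
def Cadlag (T : ℝ) (f : ℝ → ℝ) : Prop :=
  (∀ t ∈ Set.Ico (0:ℝ) T, Filter.Tendsto f (nhdsWithin t (Set.Ici t)) (nhds (f t))) ∧
  (∀ t ∈ Set.Ioc (0:ℝ) T, ∃ L : ℝ, Filter.Tendsto f (nhdsWithin t (Set.Iio t)) (nhds L))

/-- `lam` is a strictly increasing continuous bijection of `[0,T]` onto itself. -/
def IsTimeChange (T : ℝ) (lam : ℝ → ℝ) : Prop :=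
  StrictMonoOn lam (Set.Icc 0 T) ∧ ContinuousOn lam (Set.Icc 0 T) ∧
  Set.MapsTo lam (Set.Icc 0 T) (Set.Icc 0 T) ∧
  Set.SurjOn lam (Set.Icc 0 T) (Set.Icc 0 T) ∧ lam 0 = 0 ∧ lam T = T

/-- Uniform distance of two (bounded) functions over `[0,T]`. -/
def unifDist (T : ℝ) (f g : ℝ → ℝ) : ℝ :=
  sSup {r : ℝ | ∃ t ∈ Set.Icc (0:ℝ) T, r = |f t - g t|}

/-- The Skorokhod `J₁` distance on `[0,T]`. -/
def J1Dist (T : ℝ) (f g : ℝ → ℝ) : ℝ :=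
  sInf {r : ℝ | ∃ lam : ℝ → ℝ, IsTimeChange T lam ∧
    r = max (unifDist T (fun t => f (lam t)) g) (unifDist T lam id)}

/-- The product `J₁` distance on `d`-tuples of paths. -/
def prodJ1Dist (T : ℝ) {d : ℕ} (ξ ζ : Fin d → ℝ → ℝ) : ℝ :=
  ∑ i, J1Dist T (ξ i) (ζ i)

/-- A substochastic routing matrix with zero diagonal whose powers tend to zero. -/
def Substochastic {d : ℕ} (Q : Matrix (Fin d) (Fin d) ℝ) : Prop :=
  (∀ i j, 0 ≤ Q i j) ∧ (∀ i, Q i i = 0) ∧ (∀ i, ∑ j, Q i j ≤ 1) ∧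
  Filter.Tendsto (fun n : ℕ => Q ^ n) Filter.atTop (nhds 0)

/-- The reflection matrix `𝒬 = I - Qᵀ`. -/
def refMatrix {d : ℕ} (Q : Matrix (Fin d) (Fin d) ℝ) : Matrix (Fin d) (Fin d) ℝ :=
  1 - Q.transpose

/-- `ζ` belongs to the feasible regulator set `Ψ(ξ)`: each coordinate of `ζ` is a
nondecreasing càdlàg path, nonnegative at the origin, and `ξ + 𝒬 ζ ≥ 0` on `[0,T]`. -/
def Feasible (T : ℝ) {d : ℕ} (Q : Matrix (Fin d) (Fin d) ℝ)
    (ξ ζ : Fin d → ℝ → ℝ) : Prop :=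
  (∀ i, Cadlag T (ζ i) ∧ MonotoneOn (ζ i) (Set.Icc 0 T) ∧ 0 ≤ ζ i 0) ∧
  (∀ t ∈ Set.Icc (0:ℝ) T, ∀ i, 0 ≤ ξ i t + ∑ j, refMatrix Q i j * ζ j t)

/-- The regulator map `ψ`, defined coordinatewise and pointwise as the infimum of the
feasible regulator set. -/
def regulator (T : ℝ) {d : ℕ} (Q : Matrix (Fin d) (Fin d) ℝ)
    (ξ : Fin d → ℝ → ℝ) : Fin d → ℝ → ℝ :=
  fun i t => sInf {z : ℝ | ∃ ζ, Feasible T Q ξ ζ ∧ z = ζ i t}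

/-- The content map `φ(ξ) = ξ + 𝒬 ψ(ξ)`. -/
def content (T : ℝ) {d : ℕ} (Q : Matrix (Fin d) (Fin d) ℝ)
    (ξ : Fin d → ℝ → ℝ) : Fin d → ℝ → ℝ :=
  fun i t => ξ i t + ∑ j, refMatrix Q i j * regulator T Q ξ j t

/-- `D^β[0,T]`: càdlàg paths `f` with `f 0 ≥ 0` such that `t ↦ f t - β t` is nondecreasing. -/
def DBeta (T β : ℝ) (f : ℝ → ℝ) : Prop :=
  Cadlag T f ∧ 0 ≤ f 0 ∧ MonotoneOn (fun t => f t - β * t) (Set.Icc 0 T)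

open Matrix Topology

/-!
Since `Qⁿ → 0` there is `x ≥ 0` with `(I - Qᵀ) x ≥ 1`. Raising a feasible regulator by `c • x`
therefore absorbs a downward perturbation of size `c` of the input, and composing a feasible
regulator with the delay `t ↦ (t - r)⁺` shows that delaying the input can only lower the regulator.
Paths in `D^β` have no downward jumps and lose at most `|β| r` over a time `r`, so if `ζ` is
`J₁`-close to `ξ` within `r` then `ζ ≥ ξ ∘ delay r - (1 + 2B) r`, and symmetrically. This bounds
`ψ(ξ) - ψ(ζ)` uniformly by `O(r)` and, comparing `ξ` with itself, makes `ψ(ξ)` Lipschitz in time.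
The regulators are then matched by the identity time change, and the contents `ξ + 𝒬 ψ(ξ)` by the
time change that matches `ξ` with `ζ`.
-/

theorem exists_nonneg_one_le_refMatrix_mulVec {d : ℕ} {Q : Matrix (Fin d) (Fin d) ℝ}
    (hQ0 : ∀ i j, 0 ≤ Q i j) (hQ : Tendsto (fun n : ℕ => Q ^ n) atTop (𝓝 0)) :
    ∃ x : Fin d → ℝ, 0 ≤ x ∧ 1 ≤ refMatrix Q *ᵥ x := by
  set A := Qᵀ
  have hcont : Continuous fun M : Matrix (Fin d) (Fin d) ℝ => Mᵀ *ᵥ (1 : Fin d → ℝ) :=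
    continuous_id.matrix_transpose.matrix_mulVec continuous_const
  have hlim : Tendsto (fun n : ℕ => A ^ n *ᵥ 1) atTop (𝓝 0) := by
    simpa [Function.comp_def, A, transpose_pow] using (hcont.tendsto 0).comp hQ
  obtain ⟨N, hN⟩ : ∃ N, ∀ i, (A ^ N *ᵥ 1) i ≤ 1 / 2 :=
    (eventually_all.2 fun i =>
      (tendsto_pi_nhds.1 hlim i).eventually (eventually_le_nhds (by norm_num))).exists
  refine ⟨(2 : ℝ) • ((∑ n ∈ Finset.range N, A ^ n) *ᵥ 1), fun i => ?_, fun i => ?_⟩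
  · have hsum : ∀ j, 0 ≤ (∑ n ∈ Finset.range N, A ^ n) i j := fun j => by
      rw [Matrix.sum_apply]
      exact Finset.sum_nonneg fun n _ => pow_apply_nonneg (fun i j => hQ0 j i) n i j
    simpa [mulVec, dotProduct] using Finset.sum_nonneg fun j _ => hsum j
  · have hgeom : refMatrix Q * ∑ n ∈ Finset.range N, A ^ n = 1 - A ^ N := mul_neg_geom_sum A N
    rw [mulVec_smul, mulVec_mulVec, hgeom, sub_mulVec, one_mulVec]
    simp only [Pi.smul_apply, Pi.sub_apply, Pi.one_apply, smul_eq_mul]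
    linarith [hN i]

section Cadlag

variable {T : ℝ} {f g σ : ℝ → ℝ}

theorem Continuous.cadlag (hf : Continuous f) : Cadlag T f :=
  ⟨fun _ _ => hf.continuousWithinAt,
    fun t _ => ⟨f t, hf.continuousWithinAt⟩⟩

theorem Cadlag.add (hf : Cadlag T f) (hg : Cadlag T g) : Cadlag T (f + g) := by
  refine ⟨fun t ht => (hf.1 t ht).add (hg.1 t ht), fun t ht => ?_⟩
  obtain ⟨L, hL⟩ := hf.2 t ht
  obtain ⟨M, hM⟩ := hg.2 t ht
  exact ⟨L + M, hL.add hM⟩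

theorem Cadlag.comp_monotone (hf : Cadlag T f) (hσ : Monotone σ) (hσc : Continuous σ)
    (hσT : ∀ t ∈ Icc 0 T, σ t ∈ Icc 0 t) : Cadlag T (f ∘ σ) := by
  constructor
  · intro t ht
    have hσt := hσT t (Ico_subset_Icc_self ht)
    have hright : Tendsto σ (𝓝[≥] t) (𝓝[≥] σ t) :=
      tendsto_nhdsWithin_iff.2 ⟨hσc.continuousWithinAt,
        eventually_nhdsWithin_of_forall fun u hu => hσ hu⟩
    exact (hf.1 (σ t) ⟨hσt.1, hσt.2.trans_lt ht.2⟩).comp hright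
  · intro t ht
    have hσt := hσT t (Ioc_subset_Icc_self ht)
    by_cases hflat : ∃ u ∈ Ioo 0 t, σ u = σ t
    · obtain ⟨u, hu, hσu⟩ := hflat
      refine ⟨f (σ t), tendsto_const_nhds.congr' ?_⟩
      filter_upwards [Ioo_mem_nhdsLT hu.2] with w hw
      rw [Function.comp_apply, le_antisymm (hσ hw.2.le) (hσu ▸ hσ hw.1.le)]
    · push Not at hflat
      have hlt : ∀ u ∈ Ioo 0 t, σ u < σ t := fun u hu =>
        (hσ hu.2.le).lt_of_ne (hflat u hu)
      have hpos : 0 < σ t := by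
        have hmid : t / 2 ∈ Ioo 0 t := ⟨by linarith [ht.1], by linarith [ht.1]⟩
        exact (hσT _ ⟨hmid.1.le, hmid.2.le.trans ht.2⟩).1.trans_lt (hlt _ hmid)
      obtain ⟨L, hL⟩ := hf.2 (σ t) ⟨hpos, hσt.2.trans ht.2⟩
      refine ⟨L, hL.comp (tendsto_nhdsWithin_iff.2 ⟨hσc.continuousWithinAt, ?_⟩)⟩
      filter_upwards [Ioo_mem_nhdsLT ht.1] with u hu using hlt u hu

end Cadlag

section Regulator

variable {T : ℝ} {d : ℕ} {Q : Matrix (Fin d) (Fin d) ℝ} {f g η : Fin d → ℝ → ℝ}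
  {x : Fin d → ℝ} {σ : ℝ → ℝ} {i : Fin d} {c t : ℝ}

theorem Feasible.nonneg (hη : Feasible T Q f η) (ht : t ∈ Icc 0 T) (i : Fin d) : 0 ≤ η i t :=
  (hη.1 i).2.2.trans ((hη.1 i).2.1 ⟨le_rfl, ht.1.trans ht.2⟩ ht ht.1)

theorem regulator_le (hη : Feasible T Q f η) (ht : t ∈ Icc 0 T) : regulator T Q f i t ≤ η i t :=
  csInf_le ⟨0, by rintro _ ⟨η', hη', rfl⟩; exact hη'.nonneg ht i⟩ ⟨η, hη, rfl⟩

theorem le_regulator {a : ℝ} (hf : ∃ η, Feasible T Q f η)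
    (h : ∀ η, Feasible T Q f η → a ≤ η i t) : a ≤ regulator T Q f i t := by
  obtain ⟨η, hη⟩ := hf
  exact le_csInf ⟨_, η, hη, rfl⟩ (by rintro _ ⟨η', hη', rfl⟩; exact h η' hη')

theorem regulator_monotoneOn (hf : ∃ η, Feasible T Q f η) :
    MonotoneOn (regulator T Q f i) (Icc 0 T) := fun _ hs _ ht hst =>
  le_regulator hf fun _ hη => (regulator_le hη hs).trans ((hη.1 i).2.1 hs ht hst)

theorem feasible_zero : Feasible T Q 0 0 :=
  ⟨fun _ => ⟨continuous_const.cadlag, monotoneOn_const, le_rfl⟩, fun _ _ _ => by simp⟩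

theorem Feasible.add_smul (hη : Feasible T Q f η) (hx0 : 0 ≤ x) (hx1 : 1 ≤ refMatrix Q *ᵥ x)
    (hc : 0 ≤ c) (hfg : ∀ i, ∀ t ∈ Icc 0 T, f i t - c ≤ g i t) :
    Feasible T Q g (fun i t => η i t + c * x i) := by
  refine ⟨fun i => ⟨(hη.1 i).1.add continuous_const.cadlag, fun _ hs _ ht hst => ?_, ?_⟩,
    fun t ht i => ?_⟩
  · simpa using (hη.1 i).2.1 hs ht hst
  · exact add_nonneg (hη.1 i).2.2 (mul_nonneg hc (hx0 i))
  · have hsplit : ∑ j, refMatrix Q i j * (η j t + c * x j)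
        = ∑ j, refMatrix Q i j * η j t + c * (refMatrix Q *ᵥ x) i := by
      simp only [mul_add, Finset.sum_add_distrib, mulVec, dotProduct, Finset.mul_sum]
      exact congrArg _ (Finset.sum_congr rfl fun j _ => by ring)
    have hcx : c ≤ c * (refMatrix Q *ᵥ x) i := le_mul_of_one_le_right hc (hx1 i)
    linarith [hη.2 t ht i, hfg i t ht]

theorem exists_feasible_of_neg_le (hx0 : 0 ≤ x) (hx1 : 1 ≤ refMatrix Q *ᵥ x) (hc : 0 ≤ c)
    (hf : ∀ i, ∀ t ∈ Icc 0 T, -c ≤ f i t) : ∃ η, Feasible T Q f η :=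
  ⟨_, feasible_zero.add_smul hx0 hx1 hc fun i t ht => by simpa using hf i t ht⟩

theorem Feasible.comp (hη : Feasible T Q f η) (hT : 0 ≤ T) (hσ : Monotone σ)
    (hσc : Continuous σ) (hσT : ∀ t ∈ Icc 0 T, σ t ∈ Icc 0 t) :
    Feasible T Q (fun i => f i ∘ σ) (fun i => η i ∘ σ) := by
  have hmaps : ∀ t ∈ Icc 0 T, σ t ∈ Icc 0 T := fun t ht =>
    Icc_subset_Icc_right ht.2 (hσT t ht)
  have hσ0 : σ 0 = 0 := by
    have := hσT 0 ⟨le_rfl, hT⟩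
    exact le_antisymm this.2 this.1
  refine ⟨fun i => ⟨(hη.1 i).1.comp_monotone hσ hσc hσT, fun s hs t ht hst => ?_, ?_⟩,
    fun t ht => hη.2 (σ t) (hmaps t ht)⟩
  · exact (hη.1 i).2.1 (hmaps s hs) (hmaps t ht) (hσ hst)
  · simpa [hσ0] using (hη.1 i).2.2

theorem regulator_le_add_smul (hf : ∃ η, Feasible T Q f η) (hx0 : 0 ≤ x)
    (hx1 : 1 ≤ refMatrix Q *ᵥ x) (hc : 0 ≤ c) (hfg : ∀ i, ∀ t ∈ Icc 0 T, f i t - c ≤ g i t)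
    (ht : t ∈ Icc 0 T) : regulator T Q g i t ≤ regulator T Q f i t + c * x i := by
  have := le_regulator (i := i) (t := t) (a := regulator T Q g i t - c * x i) hf fun η hη =>
    sub_le_iff_le_add.2 (regulator_le (hη.add_smul hx0 hx1 hc hfg) ht)
  linarith

theorem regulator_comp_le (hf : ∃ η, Feasible T Q f η) (hT : 0 ≤ T) (hσ : Monotone σ)
    (hσc : Continuous σ) (hσT : ∀ t ∈ Icc 0 T, σ t ∈ Icc 0 t) (ht : t ∈ Icc 0 T) :
    regulator T Q (fun i => f i ∘ σ) i t ≤ regulator T Q f i (σ t) :=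
  le_regulator hf fun _ hη => regulator_le (hη.comp hT hσ hσc hσT) ht

end Regulator

def delay (r t : ℝ) : ℝ := max (t - r) 0

theorem monotone_delay (r : ℝ) : Monotone (delay r) := fun _ _ h =>
  max_le_max (sub_le_sub_right h r) le_rfl

theorem continuous_delay (r : ℝ) : Continuous (delay r) :=
  (continuous_id.sub continuous_const).max continuous_const

theorem delay_mem_Icc {r t : ℝ} (hr : 0 ≤ r) (ht : 0 ≤ t) : delay r t ∈ Icc 0 t :=
  ⟨le_max_right _ _, max_le (by linarith) ht⟩

def J1Near (T r : ℝ) (f g : ℝ → ℝ) : Prop :=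
  ∀ t ∈ Icc 0 T, ∃ s ∈ Icc 0 T, |s - t| ≤ r ∧ |f s - g t| ≤ r

theorem J1Near.refl {T r : ℝ} (hr : 0 ≤ r) (f : ℝ → ℝ) : J1Near T r f f :=
  fun t ht => ⟨t, ht, by simpa using hr, by simpa using hr⟩

section DBeta

variable {T β B a b r t : ℝ} {f g : ℝ → ℝ}

theorem DBeta.le_add_mul (hf : DBeta T β f) (hB : |β| ≤ B) (ha : 0 ≤ a) (hab : a ≤ b)
    (hb : b ≤ T) : f a ≤ f b + B * (b - a) := by
  have hmono : f a - β * a ≤ f b - β * b := hf.2.2 ⟨ha, hab.trans hb⟩ ⟨ha.trans hab, hb⟩ hab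
  have hdrift : -β * (b - a) ≤ B * (b - a) :=
    mul_le_mul_of_nonneg_right ((neg_le_abs β).trans hB) (sub_nonneg.2 hab)
  linarith

theorem DBeta.neg_mul_le (hf : DBeta T β f) (hB : |β| ≤ B) (ht : t ∈ Icc 0 T) :
    -(B * t) ≤ f t := by
  have := hf.le_add_mul hB le_rfl ht.1 ht.2
  linarith [hf.2.1]

theorem DBeta.exists_abs_le (hf : DBeta T β f) : ∃ M, ∀ t ∈ Icc 0 T, |f t| ≤ M := by
  refine ⟨|f T| + |β| * T, fun t ht => abs_le.2 ⟨?_, ?_⟩⟩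
  · have hlow := hf.neg_mul_le le_rfl ht
    nlinarith [abs_nonneg (f T), mul_le_mul_of_nonneg_left ht.2 (abs_nonneg β)]
  · have hup := hf.le_add_mul le_rfl ht.1 ht.2 le_rfl
    nlinarith [le_abs_self (f T), mul_nonneg (abs_nonneg β) ht.1]

theorem DBeta.comp_delay_sub_le (hf : DBeta T β f) (hB : |β| ≤ B) (hfg : J1Near T r f g)
    (ht : t ∈ Icc 0 T) : f (delay r t) - (1 + 2 * B) * r ≤ g t := by
  obtain ⟨s, hs, hst, hfs⟩ := hfg t ht
  rw [abs_le] at hst hfs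
  have hds : delay r t ≤ s := max_le (by linarith) hs.1
  have hdt : t - r ≤ delay r t := le_max_left _ _
  have hgap : B * (s - delay r t) ≤ B * (2 * r) :=
    mul_le_mul_of_nonneg_left (by linarith) ((abs_nonneg β).trans hB)
  have hdrift : f (delay r t) ≤ f s + B * (s - delay r t) :=
    hf.le_add_mul hB (le_max_right _ _) hds hs.2
  linarith

end DBeta

section Skorokhod

variable {T M r : ℝ} {f g lam : ℝ → ℝ}

theorem isTimeChange_id (T : ℝ) : IsTimeChange T id :=
  ⟨strictMonoOn_id, continuousOn_id, mapsTo_id _, surjOn_id _, rfl, rfl⟩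

theorem unifDist_nonneg : 0 ≤ unifDist T f g :=
  Real.sSup_nonneg (by rintro _ ⟨_, _, rfl⟩; exact abs_nonneg _)

theorem abs_sub_le_unifDist (hM : ∀ t ∈ Icc 0 T, |f t - g t| ≤ M) {t : ℝ} (ht : t ∈ Icc 0 T) :
    |f t - g t| ≤ unifDist T f g :=
  le_csSup ⟨M, by rintro _ ⟨s, hs, rfl⟩; exact hM s hs⟩ ⟨t, ht, rfl⟩

theorem J1Dist_nonneg : 0 ≤ J1Dist T f g :=
  Real.sInf_nonneg (by rintro _ ⟨_, _, rfl⟩; exact le_max_of_le_left unifDist_nonneg)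

theorem J1Dist_le_of_forall (hT : 0 ≤ T) (hlam : IsTimeChange T lam)
    (hval : ∀ t ∈ Icc 0 T, |f (lam t) - g t| ≤ M) (htime : ∀ t ∈ Icc 0 T, |lam t - t| ≤ M) :
    J1Dist T f g ≤ M := by
  refine le_trans (b := max (unifDist T (fun t => f (lam t)) g) (unifDist T lam id)) ?_
    (max_le ?_ ?_)
  · refine csInf_le ⟨0, ?_⟩ ⟨lam, hlam, rfl⟩
    rintro _ ⟨_, _, rfl⟩
    exact le_max_of_le_left unifDist_nonneg
  · exact csSup_le ⟨_, 0, ⟨le_rfl, hT⟩, rfl⟩ (by rintro _ ⟨t, ht, rfl⟩; exact hval t ht)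
  · exact csSup_le ⟨_, 0, ⟨le_rfl, hT⟩, rfl⟩ (by rintro _ ⟨t, ht, rfl⟩; exact htime t ht)

theorem exists_isTimeChange_of_J1Dist_lt (hf : ∃ M, ∀ t ∈ Icc 0 T, |f t| ≤ M)
    (hg : ∃ M, ∀ t ∈ Icc 0 T, |g t| ≤ M) (h : J1Dist T f g < r) :
    ∃ lam, IsTimeChange T lam ∧ ∀ t ∈ Icc 0 T, |f (lam t) - g t| ≤ r ∧ |lam t - t| ≤ r := by
  unfold J1Dist at h
  obtain ⟨_, ⟨lam, hlam, rfl⟩, hlt⟩ :=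
    exists_lt_of_csInf_lt (by exact ⟨_, id, isTimeChange_id T, rfl⟩) h
  obtain ⟨Mf, hMf⟩ := hf
  obtain ⟨Mg, hMg⟩ := hg
  have hmaps : ∀ t ∈ Icc 0 T, lam t ∈ Icc 0 T := fun t ht => hlam.2.2.1 ht
  have hval : ∀ t ∈ Icc 0 T, |f (lam t) - g t| ≤ Mf + Mg := fun t ht =>
    (abs_sub _ _).trans (add_le_add (hMf _ (hmaps t ht)) (hMg t ht))
  have htime : ∀ t ∈ Icc 0 T, |lam t - id t| ≤ T := fun t ht => by
    simpa [Real.dist_eq] using Real.dist_le_of_mem_Icc (hmaps t ht) ht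
  exact ⟨lam, hlam, fun t ht =>
    ⟨(abs_sub_le_unifDist hval ht).trans ((le_max_left _ _).trans hlt.le),
      (abs_sub_le_unifDist htime ht).trans ((le_max_right _ _).trans hlt.le)⟩⟩

theorem J1Near.of_isTimeChange (hlam : IsTimeChange T lam)
    (h : ∀ t ∈ Icc 0 T, |f (lam t) - g t| ≤ r ∧ |lam t - t| ≤ r) : J1Near T r f g :=
  fun t ht => ⟨lam t, hlam.2.2.1 ht, (h t ht).2, (h t ht).1⟩

theorem J1Near.of_isTimeChange_symm (hlam : IsTimeChange T lam)
    (h : ∀ t ∈ Icc 0 T, |f (lam t) - g t| ≤ r ∧ |lam t - t| ≤ r) : J1Near T r g f := by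
  intro t ht
  obtain ⟨u, hu, rfl⟩ := hlam.2.2.2.1 ht
  exact ⟨u, hu, abs_sub_comm u (lam u) ▸ (h u hu).2, abs_sub_comm (g u) _ ▸ (h u hu).1⟩

end Skorokhod

section Lipschitz

variable {T B r s t : ℝ} {d : ℕ} {Q : Matrix (Fin d) (Fin d) ℝ} {β x : Fin d → ℝ}
  {f g ξ ζ : Fin d → ℝ → ℝ} {i : Fin d} {lam : ℝ → ℝ}

theorem exists_feasible_of_dBeta (hT : 0 ≤ T) (hx0 : 0 ≤ x) (hx1 : 1 ≤ refMatrix Q *ᵥ x)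
    (hf : ∀ j, DBeta T (β j) (f j)) : ∃ η, Feasible T Q f η := by
  have hB : ∀ j, |β j| ≤ ∑ k, |β k| := fun j =>
    Finset.single_le_sum (fun k _ => abs_nonneg (β k)) (Finset.mem_univ j)
  refine exists_feasible_of_neg_le hx0 hx1 (c := (∑ k, |β k|) * T)
    (mul_nonneg (Finset.sum_nonneg fun k _ => abs_nonneg (β k)) hT) fun j t ht => ?_
  have := (hf j).neg_mul_le (hB j) ht
  nlinarith [mul_le_mul_of_nonneg_left ht.2 ((abs_nonneg _).trans (hB j))]

theorem regulator_le_add_of_near (hT : 0 ≤ T) (hx0 : 0 ≤ x) (hx1 : 1 ≤ refMatrix Q *ᵥ x)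
    (hB : ∀ j, |β j| ≤ B) (hf : ∀ j, DBeta T (β j) (f j)) (hr : 0 ≤ r)
    (hfg : ∀ j, J1Near T r (f j) (g j)) (hs : s ∈ Icc 0 T) (ht : t ∈ Icc 0 T) (hts : t - r ≤ s) :
    regulator T Q g i t ≤ regulator T Q f i s + (1 + 2 * B) * r * x i := by
  have hB0 : 0 ≤ B := (abs_nonneg _).trans (hB i)
  obtain ⟨η, hη⟩ := exists_feasible_of_dBeta (Q := Q) hT hx0 hx1 hf
  have hdelay : ∀ t ∈ Icc 0 T, delay r t ∈ Icc 0 t := fun t ht => delay_mem_Icc hr ht.1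
  calc regulator T Q g i t
      ≤ regulator T Q (fun j => f j ∘ delay r) i t + (1 + 2 * B) * r * x i :=
        regulator_le_add_smul ⟨_, hη.comp hT (monotone_delay r) (continuous_delay r) hdelay⟩
          hx0 hx1 (by positivity) (fun j t ht => (hf j).comp_delay_sub_le (hB j) (hfg j) ht) ht
    _ ≤ regulator T Q f i (delay r t) + (1 + 2 * B) * r * x i := by
        gcongr
        exact regulator_comp_le ⟨η, hη⟩ hT (monotone_delay r) (continuous_delay r) hdelay ht
    _ ≤ regulator T Q f i s + (1 + 2 * B) * r * x i := by
        gcongr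
        exact regulator_monotoneOn ⟨η, hη⟩ (Icc_subset_Icc_right ht.2 (hdelay t ht)) hs
          (max_le hts hs.1)

theorem abs_regulator_sub_le (hT : 0 ≤ T) (hx0 : 0 ≤ x) (hx1 : 1 ≤ refMatrix Q *ᵥ x)
    (hB : ∀ j, |β j| ≤ B) (hξ : ∀ j, DBeta T (β j) (ξ j)) (hζ : ∀ j, DBeta T (β j) (ζ j))
    (hr : 0 ≤ r) (hξζ : ∀ j, J1Near T r (ξ j) (ζ j)) (hζξ : ∀ j, J1Near T r (ζ j) (ξ j))
    (ht : t ∈ Icc 0 T) :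
    |regulator T Q ξ i t - regulator T Q ζ i t| ≤ (1 + 2 * B) * r * x i :=
  abs_sub_le_iff.2
    ⟨sub_left_le_of_le_add (regulator_le_add_of_near hT hx0 hx1 hB hζ hr hζξ ht ht (by linarith)),
      sub_left_le_of_le_add (regulator_le_add_of_near hT hx0 hx1 hB hξ hr hξζ ht ht (by linarith))⟩

theorem abs_regulator_sub_regulator_le (hT : 0 ≤ T) (hx0 : 0 ≤ x)
    (hx1 : 1 ≤ refMatrix Q *ᵥ x) (hB : ∀ j, |β j| ≤ B) (hf : ∀ j, DBeta T (β j) (f j))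
    (hs : s ∈ Icc 0 T) (ht : t ∈ Icc 0 T) (hst : |s - t| ≤ r) :
    |regulator T Q f i s - regulator T Q f i t| ≤ (1 + 2 * B) * r * x i := by
  have hr : 0 ≤ r := (abs_nonneg _).trans hst
  rw [abs_le] at hst
  have hnear : ∀ j, J1Near T r (f j) (f j) := fun j => J1Near.refl hr (f j)
  exact abs_sub_le_iff.2
    ⟨sub_left_le_of_le_add
      (regulator_le_add_of_near hT hx0 hx1 hB hf hr hnear ht hs (by linarith)),
    sub_left_le_of_le_add
      (regulator_le_add_of_near hT hx0 hx1 hB hf hr hnear hs ht (by linarith))⟩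

theorem abs_content_sub_le (s t : ℝ) :
    |content T Q ξ i s - content T Q ζ i t| ≤
      |ξ i s - ζ i t| + ∑ j, |refMatrix Q i j| * |regulator T Q ξ j s - regulator T Q ζ j t| := by
  have hsplit : content T Q ξ i s - content T Q ζ i t = (ξ i s - ζ i t) +
      ∑ j, refMatrix Q i j * (regulator T Q ξ j s - regulator T Q ζ j t) := by
    simp only [content, mul_sub, Finset.sum_sub_distrib]
    ring
  rw [hsplit]
  refine (abs_add_le _ _).trans (add_le_add_right ((Finset.abs_sum_le_sum_abs _ _).trans_eq ?_) _)
  simp only [abs_mul]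

theorem J1Dist_regulator_le (hT : 0 ≤ T) (hx0 : 0 ≤ x) (hx1 : 1 ≤ refMatrix Q *ᵥ x)
    (hB : ∀ j, |β j| ≤ B) (hξ : ∀ j, DBeta T (β j) (ξ j)) (hζ : ∀ j, DBeta T (β j) (ζ j))
    (hr : 0 ≤ r) (hξζ : ∀ j, J1Near T r (ξ j) (ζ j)) (hζξ : ∀ j, J1Near T r (ζ j) (ξ j)) :
    J1Dist T (regulator T Q ξ i) (regulator T Q ζ i) ≤ (1 + 2 * B) * x i * r := by
  have hB0 : 0 ≤ B := (abs_nonneg _).trans (hB i)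
  rw [mul_right_comm]
  refine J1Dist_le_of_forall hT (isTimeChange_id T)
    (fun t ht => abs_regulator_sub_le hT hx0 hx1 hB hξ hζ hr hξζ hζξ ht) fun t _ => ?_
  simp only [id, sub_self, abs_zero]
  exact mul_nonneg (mul_nonneg (by linarith) hr) (hx0 i)

theorem J1Dist_content_le (hT : 0 ≤ T) (hx0 : 0 ≤ x) (hx1 : 1 ≤ refMatrix Q *ᵥ x)
    (hB : ∀ j, |β j| ≤ B) (hξ : ∀ j, DBeta T (β j) (ξ j)) (hζ : ∀ j, DBeta T (β j) (ζ j))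
    (hr : 0 ≤ r) (hξζ : ∀ j, J1Near T r (ξ j) (ζ j)) (hζξ : ∀ j, J1Near T r (ζ j) (ξ j))
    (hlam : IsTimeChange T lam)
    (hclose : ∀ t ∈ Icc 0 T, |ξ i (lam t) - ζ i t| ≤ r ∧ |lam t - t| ≤ r) :
    J1Dist T (content T Q ξ i) (content T Q ζ i) ≤
      (1 + 2 * (1 + 2 * B) * ∑ j, |refMatrix Q i j| * x j) * r := by
  have hB0 : 0 ≤ B := (abs_nonneg _).trans (hB i)
  have hsum : 0 ≤ ∑ j, |refMatrix Q i j| * x j :=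
    Finset.sum_nonneg fun j _ => mul_nonneg (abs_nonneg _) (hx0 j)
  have hone : r ≤ (1 + 2 * (1 + 2 * B) * ∑ j, |refMatrix Q i j| * x j) * r :=
    le_mul_of_one_le_left hr (le_add_of_nonneg_right (mul_nonneg (by linarith) hsum))
  refine J1Dist_le_of_forall hT hlam (fun t ht => ?_) fun t ht => (hclose t ht).2.trans hone
  have hmaps := hlam.2.2.1 ht
  have hreg : ∀ j, |regulator T Q ξ j (lam t) - regulator T Q ζ j t| ≤
      2 * ((1 + 2 * B) * r * x j) := fun j => by
    rw [two_mul]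
    exact (abs_sub_le _ (regulator T Q ξ j t) _).trans (add_le_add
      (abs_regulator_sub_regulator_le hT hx0 hx1 hB hξ hmaps ht (hclose t ht).2)
      (abs_regulator_sub_le hT hx0 hx1 hB hξ hζ hr hξζ hζξ ht))
  calc |content T Q ξ i (lam t) - content T Q ζ i t|
      ≤ r + ∑ j, |refMatrix Q i j| * (2 * ((1 + 2 * B) * r * x j)) :=
        (abs_content_sub_le _ _).trans (add_le_add (hclose t ht).1
          (Finset.sum_le_sum fun j _ => mul_le_mul_of_nonneg_left (hreg j) (abs_nonneg _)))
    _ = (1 + 2 * (1 + 2 * B) * ∑ j, |refMatrix Q i j| * x j) * r := by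
        have hexpand : ∑ j, |refMatrix Q i j| * (2 * ((1 + 2 * B) * r * x j)) =
            2 * (1 + 2 * B) * (∑ j, |refMatrix Q i j| * x j) * r := by
          rw [Finset.mul_sum, Finset.sum_mul]
          exact Finset.sum_congr rfl fun j _ => by ring
        rw [hexpand]
        ring

theorem prodJ1Dist_content_add_regulator_le (hT : 0 ≤ T) (hx0 : 0 ≤ x)
    (hx1 : 1 ≤ refMatrix Q *ᵥ x) (hB : ∀ j, |β j| ≤ B) (hξ : ∀ j, DBeta T (β j) (ξ j))
    (hζ : ∀ j, DBeta T (β j) (ζ j)) (hr : ∀ j, J1Dist T (ξ j) (ζ j) < r) :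
    prodJ1Dist T (content T Q ξ) (content T Q ζ) +
        prodJ1Dist T (regulator T Q ξ) (regulator T Q ζ) ≤
      (∑ i, (1 + 2 * (1 + 2 * B) * ∑ j, |refMatrix Q i j| * x j) + ∑ i, (1 + 2 * B) * x i) * r := by
  choose lam hlam hclose using fun j =>
    exists_isTimeChange_of_J1Dist_lt (hξ j).exists_abs_le (hζ j).exists_abs_le (hr j)
  have hξζ := fun j => J1Near.of_isTimeChange (hlam j) (hclose j)
  have hζξ := fun j => J1Near.of_isTimeChange_symm (hlam j) (hclose j)
  have hr0 : ∀ i, 0 ≤ r := fun i => J1Dist_nonneg.trans (hr i).le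
  rw [add_mul, Finset.sum_mul, Finset.sum_mul]
  exact add_le_add
    (Finset.sum_le_sum fun i _ =>
      J1Dist_content_le hT hx0 hx1 hB hξ hζ (hr0 i) hξζ hζξ (hlam i) (hclose i))
    (Finset.sum_le_sum fun i _ => J1Dist_regulator_le hT hx0 hx1 hB hξ hζ (hr0 i) hξζ hζξ)

end Lipschitz

theorem reflection_map_lipschitz_prodJ1_general
    (T : ℝ) (hT : 0 < T) (d : ℕ) (β : Fin d → ℝ)
    (Q : Matrix (Fin d) (Fin d) ℝ) (hQ : Substochastic Q) :
    ∃ C : ℝ, ∀ ξ ζ : Fin d → ℝ → ℝ,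
      (∀ i, DBeta T (β i) (ξ i)) → (∀ i, DBeta T (β i) (ζ i)) →
      prodJ1Dist T (content T Q ξ) (content T Q ζ) +
          prodJ1Dist T (regulator T Q ξ) (regulator T Q ζ) ≤
        C * prodJ1Dist T ξ ζ := by
  obtain ⟨x, hx0, hx1⟩ := exists_nonneg_one_le_refMatrix_mulVec hQ.1 hQ.2.2.2
  set B := ∑ k, |β k|
  have hB : ∀ j, |β j| ≤ B := fun j =>
    Finset.single_le_sum (fun k _ => abs_nonneg (β k)) (Finset.mem_univ j)
  -- The bound below holds at every `r > prodJ1Dist T ξ ζ`; let `r` decrease to it.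
  refine ⟨∑ i, (1 + 2 * (1 + 2 * B) * ∑ j, |refMatrix Q i j| * x j) + ∑ i, (1 + 2 * B) * x i,
    fun ξ ζ hξ hζ => ge_of_tendsto
      ((continuous_const_mul _).continuousWithinAt (s := Ioi (prodJ1Dist T ξ ζ))) ?_⟩
  filter_upwards [self_mem_nhdsWithin] with r hr
  exact prodJ1Dist_content_add_regulator_le hT.le hx0 hx1 hB hξ hζ fun j =>
    (Finset.single_le_sum (fun k _ => J1Dist_nonneg) (Finset.mem_univ j)).trans_lt hr

/-- The reflection map `R = (φ, ψ)` is Lipschitz continuous on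
`∏_{i=1}^d D^{β_i}[0,T]` with respect to the product `J₁` distance. -/
theorem reflection_map_lipschitz_prodJ1
    (T : ℝ) (hT : 0 < T) (d : ℕ) (hd : 1 ≤ d) (β : Fin d → ℝ)
    (Q : Matrix (Fin d) (Fin d) ℝ) (hQ : Substochastic Q) :
    ∃ C : ℝ, ∀ ξ ζ : Fin d → ℝ → ℝ,
      (∀ i, DBeta T (β i) (ξ i)) → (∀ i, DBeta T (β i) (ζ i)) →
      prodJ1Dist T (content T Q ξ) (content T Q ζ) +
          prodJ1Dist T (regulator T Q ξ) (regulator T Q ζ) ≤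
        C * prodJ1Dist T ξ ζ :=
  reflection_map_lipschitz_prodJ1_general T hT d β Q hQ
end
end

section
/- (Two-node tandem buffer formula.) Let T > 0, rates 0 ≤ μ₁ < r₁, μ₂ ≥ 0, r₂ > 0 with μ₁ + μ₂ ≤ r₂, a jump size x₁ ∈ [0, (r₁−μ₁)T] at node 1, and a jump size x₂ ≥ 0 at node 2. Set u₁ = T − x₁/(r₁−μ₁) and define, for t ∈ [0,T]: the input to node 1, J₁(t) = μ₁t + x₁𝟙{t ≥ u₁}; the netput of node 1, X₁(t) = J₁(t) − r₁t; the buffer content of node 1, z₁(t) = X₁(t) − min(0, inf_{s∈[0,t]} X₁(s)); the cumulative output of node 1, O(t) = J₁(t) − z₁(t); the netput of node 2, X₂(t) = O(t) + μ₂t + x₂𝟙{t ≥ T} − r₂t; and the buffer content of node 2 at time T, z₂(T) = X₂(T) − min(0, inf_{u∈[0,T]} X₂(u)). Then z₂(T) = x₂ + max(r₁ + μ₂ − r₂, 0) · x₁/(r₁−μ₁). In particular, if r₂ ≥ r₁ + μ₂ then z₂(T) = x₂, i.e. the jump at node 1 has no effect on the buffer content of node 2 at time T. -/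
/-! Node 1 empties at rate `a = r₁ - μ₁` until the jump at `u₁`, which refills it with exactly the
fluid it can process by time `T`; so on `[0, T]` its regulator is `-a·min(t, u₁)` and its output
is `r₁ t - a·min(t, u₁)`. Up to the jump at `T`, the netput of node 2 is then the continuous
piecewise linear path `σ s - a·min(s, u₁)` with `σ = r₁ + μ₂ - r₂`, which falls on `[0, u₁]`
(slope `μ₁ + μ₂ - r₂ ≤ 0`) and has slope `σ` on `[u₁, T]`. Its infimum over `[0, T]` is taken at
`u₁` if `σ ≥ 0` and at `T` otherwise, which gives the formula. -/

open Set

theorem min_zero_csInf_eq {S : Set ℝ} {m : ℝ} (hS : S.Nonempty) (hm : m ≤ 0)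
    (hlb : m ∈ lowerBounds S) (hcl : m ∈ closure (insert 0 S)) : min 0 (sInf S) = m := by
  have hglb : IsGLB (insert 0 S) m :=
    isGLB_of_mem_closure (by rw [lowerBounds_insert]; exact ⟨hm, hlb⟩) hcl
  rw [← hglb.csInf_eq (insert_nonempty 0 S), csInf_insert ⟨m, hlb⟩ hS]

theorem mem_closure_image_Ico_of_eqOn {f g : ℝ → ℝ} {a b c : ℝ} (hab : a < b)
    (hg : Continuous g) (hfg : EqOn f g (Ico a b)) (hc : c ∈ Icc a b) :
    g c ∈ closure (f '' Ico a b) := by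
  rw [hfg.image_eq]
  rw [← closure_Ico hab.ne] at hc
  exact image_closure_subset_closure_image hg (mem_image_of_mem g hc)

/-- `hx` says the jump refills at least what is drained by time `t`, so the path never returns
below its value just before the jump. -/
theorem min_zero_sInf_drain_jump {a u x t : ℝ} (ha : 0 ≤ a) (hu : 0 ≤ u) (ht : 0 ≤ t)
    (hx : a * (t - u) ≤ x) :
    min 0 (sInf ((fun s => -(a * s) + if u ≤ s then x else 0) '' Icc 0 t)) =
      -(a * min t u) := by
  set f : ℝ → ℝ := fun s => -(a * s) + if u ≤ s then x else 0
  have hv : 0 ≤ min t u := le_min ht hu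
  refine min_zero_csInf_eq ((nonempty_Icc.mpr ht).image f) (by nlinarith) ?_ ?_
  · rintro _ ⟨s, hs, rfl⟩
    simp only [f]
    split_ifs with hus
    · rw [min_eq_right (hus.trans hs.2)]
      nlinarith [hs.2]
    · have hsv : s ≤ min t u := le_min hs.2 (not_le.mp hus).le
      nlinarith
  · rcases hv.eq_or_lt with hv0 | hv0
    · rw [← hv0, mul_zero, neg_zero]
      exact subset_closure (mem_insert 0 _)
    have hdrain : EqOn f (fun s => -(a * s)) (Ico 0 (min t u)) := fun s hs => by
      simp [f, not_le.mpr (hs.2.trans_le (min_le_right t u))]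
    refine closure_mono ?_ (mem_closure_image_Ico_of_eqOn (g := fun s => -(a * s)) hv0
      (by fun_prop) hdrain (right_mem_Icc.mpr hv))
    exact (image_mono (Ico_subset_Icc_self.trans (Icc_subset_Icc_right (min_le_left t u)))).trans
      (subset_insert 0 _)

theorem le_mul_sub_mul_min {σ a u T s : ℝ} (huT : u ≤ T) (hσa : σ ≤ a) (hs : s ∈ Icc 0 T) :
    (σ - a) * u + min σ 0 * (T - u) ≤ σ * s - a * min s u := by
  have hσ0 : min σ 0 ≤ 0 := min_le_right σ 0
  rcases le_total s u with hsu | hsu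
  · rw [min_eq_left hsu]
    nlinarith [hs.1]
  · rw [min_eq_right hsu]
    nlinarith [min_le_left σ 0, hs.2]

theorem min_zero_sInf_kink_end_jump {σ a u T x : ℝ} (hT : 0 < T) (hu0 : 0 ≤ u) (huT : u ≤ T)
    (hσa : σ ≤ a) (hx : 0 ≤ x) :
    min 0 (sInf ((fun s => σ * s - a * min s u + if T ≤ s then x else 0) '' Icc 0 T)) =
      (σ - a) * u + min σ 0 * (T - u) := by
  set g : ℝ → ℝ := fun s => σ * s - a * min s u
  set f : ℝ → ℝ := fun s => σ * s - a * min s u + if T ≤ s then x else 0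
  have hfg : EqOn f g (Ico 0 T) := fun s hs => by simp [f, g, not_le.mpr hs.2]
  have hgf : ∀ s, g s ≤ f s := fun s => by
    simp only [f, g]; split_ifs <;> linarith
  have hm : (σ - a) * u + min σ 0 * (T - u) ≤ 0 := by
    nlinarith [min_le_right σ 0]
  refine min_zero_csInf_eq ((nonempty_Icc.mpr hT.le).image f) hm ?_ ?_
  · rintro _ ⟨s, hs, rfl⟩
    exact (le_mul_sub_mul_min huT hσa hs).trans (hgf s)
  · obtain ⟨c, hc, hgc⟩ : ∃ c ∈ Icc 0 T, g c = (σ - a) * u + min σ 0 * (T - u) := by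
      rcases le_total 0 σ with hσ | hσ
      · exact ⟨u, ⟨hu0, huT⟩, by simp only [g, min_self, min_eq_right hσ]; ring⟩
      · exact ⟨T, ⟨hT.le, le_rfl⟩, by simp only [g, min_eq_left hσ, min_eq_right huT]; ring⟩
    rw [← hgc]
    exact closure_mono ((image_mono Ico_subset_Icc_self).trans (subset_insert 0 _))
      (mem_closure_image_Ico_of_eqOn hT (by fun_prop) hfg hc)

theorem tandem_buffer_formula_general
    (T μ₁ μ₂ r₁ r₂ x₁ x₂ : ℝ)
    (hT : 0 < T) (hμ₁r : μ₁ < r₁)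
    (hstab : μ₁ + μ₂ ≤ r₂)
    (hx₁ : 0 ≤ x₁) (hx₁T : x₁ ≤ (r₁ - μ₁) * T) (hx₂ : 0 ≤ x₂)
    (u₁ : ℝ) (hu₁ : u₁ = T - x₁ / (r₁ - μ₁))
    (J₁ : ℝ → ℝ) (hJ₁ : J₁ = fun t => μ₁ * t + if u₁ ≤ t then x₁ else 0)
    (X₁ : ℝ → ℝ) (hX₁ : X₁ = fun t => J₁ t - r₁ * t)
    (z₁ : ℝ → ℝ) (hz₁ : z₁ = fun t => X₁ t - min 0 (sInf (X₁ '' Set.Icc 0 t)))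
    (O : ℝ → ℝ) (hO : O = fun t => J₁ t - z₁ t)
    (X₂ : ℝ → ℝ)
    (hX₂ : X₂ = fun t => O t + μ₂ * t + (if T ≤ t then x₂ else 0) - r₂ * t)
    (z₂T : ℝ) (hz₂T : z₂T = X₂ T - min 0 (sInf (X₂ '' Set.Icc 0 T))) :
    z₂T = x₂ + max (r₁ + μ₂ - r₂) 0 * (x₁ / (r₁ - μ₁)) ∧
    (r₁ + μ₂ ≤ r₂ → z₂T = x₂) := by
  have ha : 0 < r₁ - μ₁ := sub_pos.mpr hμ₁r
  have hd : T - u₁ = x₁ / (r₁ - μ₁) := by rw [hu₁]; ring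
  have hu₁0 : 0 ≤ u₁ := by rw [hu₁, sub_nonneg, div_le_iff₀ ha]; linarith
  have hu₁T : u₁ ≤ T := by rw [hu₁]; linarith [div_nonneg hx₁ ha.le]
  have hx₁u : x₁ = (r₁ - μ₁) * (T - u₁) := by rw [hd]; field_simp
  have hX₁' : X₁ = fun s => -((r₁ - μ₁) * s) + if u₁ ≤ s then x₁ else 0 := by
    subst hX₁ hJ₁; funext s; ring
  have hX₂' : EqOn X₂
      (fun s => (r₁ + μ₂ - r₂) * s - (r₁ - μ₁) * min s u₁ + if T ≤ s then x₂ else 0)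
      (Icc 0 T) := by
    intro s hs
    have hreg := min_zero_sInf_drain_jump ha.le hu₁0 hs.1 (x := x₁)
      (by rw [hx₁u]; exact mul_le_mul_of_nonneg_left (by linarith [hs.2]) ha.le)
    simp only [hX₂, hO, hz₁, hJ₁]
    rw [hX₁', hreg]
    ring
  have hz₂ : z₂T = x₂ + max (r₁ + μ₂ - r₂) 0 * (x₁ / (r₁ - μ₁)) := by
    rw [hz₂T, hX₂'.image_eq, min_zero_sInf_kink_end_jump hT hu₁0 hu₁T (by linarith) hx₂,
      hX₂' (right_mem_Icc.mpr hT.le), ← hd]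
    simp only [le_refl, ite_true, min_eq_right hu₁T]
    linear_combination (u₁ - T) * min_add_max (r₁ + μ₂ - r₂) 0
  refine ⟨hz₂, fun hσ => ?_⟩
  rw [hz₂, max_eq_right (by linarith), zero_mul, add_zero]

/-- (Two-node tandem buffer formula.) With a single jump of size `x₁` at node 1
timed so that the busy period of node 1 ends exactly at `T`, and a single jump of size `x₂` at
node 2 at time `T`, the buffer content of node 2 at time `T` equals
`x₂ + max(r₁ + μ₂ - r₂, 0) · x₁/(r₁ - μ₁)`; in particular it equals `x₂` when `r₂ ≥ r₁ + μ₂`. -/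
theorem tandem_buffer_formula
    (T μ₁ μ₂ r₁ r₂ x₁ x₂ : ℝ)
    (hT : 0 < T) (hμ₁ : 0 ≤ μ₁) (hμ₁r : μ₁ < r₁) (hμ₂ : 0 ≤ μ₂) (hr₂ : 0 < r₂)
    (hstab : μ₁ + μ₂ ≤ r₂)
    (hx₁ : 0 ≤ x₁) (hx₁T : x₁ ≤ (r₁ - μ₁) * T) (hx₂ : 0 ≤ x₂)
    (u₁ : ℝ) (hu₁ : u₁ = T - x₁ / (r₁ - μ₁))
    (J₁ : ℝ → ℝ) (hJ₁ : J₁ = fun t => μ₁ * t + if u₁ ≤ t then x₁ else 0)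
    (X₁ : ℝ → ℝ) (hX₁ : X₁ = fun t => J₁ t - r₁ * t)
    (z₁ : ℝ → ℝ) (hz₁ : z₁ = fun t => X₁ t - min 0 (sInf (X₁ '' Set.Icc 0 t)))
    (O : ℝ → ℝ) (hO : O = fun t => J₁ t - z₁ t)
    (X₂ : ℝ → ℝ)
    (hX₂ : X₂ = fun t => O t + μ₂ * t + (if T ≤ t then x₂ else 0) - r₂ * t)
    (z₂T : ℝ) (hz₂T : z₂T = X₂ T - min 0 (sInf (X₂ '' Set.Icc 0 T))) :
    z₂T = x₂ + max (r₁ + μ₂ - r₂) 0 * (x₁ / (r₁ - μ₁)) ∧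
    (r₁ + μ₂ ≤ r₂ → z₂T = x₂) :=
  tandem_buffer_formula_general T μ₁ μ₂ r₁ r₂ x₁ x₂ hT hμ₁r hstab hx₁ hx₁T hx₂ u₁ hu₁ J₁ hJ₁ X₁ hX₁
    z₁ hz₁ O hO X₂ hX₂ z₂T hz₂T
end

section
/- Fix T > 0, d ≥ 1, and a d×d substochastic matrix Q with zero diagonal and Qⁿ → 0, with regulator map ψ and content map φ. Let a = (a₁,…,a_d) ∈ ℝ^d with all a_i ≥ 0, and let ξ = (ξ⁽¹⁾,…,ξ⁽ᵈ⁾) ∈ ∏_{i=1}^d D[0,T] be such that each ξ⁽ⁱ⁾ has only nonnegative jumps (ξ⁽ⁱ⁾(t) ≥ ξ⁽ⁱ⁾(t−) for all t ∈ (0,T]) and at most one discontinuity point. Define ζ⁽ⁱ⁾(t) = ξ⁽ⁱ⁾(t) + a_i 𝟙{t = T}. Then: (i) ψ(ζ) = ψ(ξ) (equality of functions on [0,T]); (ii) φ(ζ)(T) = φ(ξ)(T) + a; (iii) for any α ∈ (0,1) and any c₁,…,c_d ≥ 0, Σ_{i=1}^d c_i Σ_{t∈(0,T]: Δζ⁽ⁱ⁾(t)>0}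 (Δζ⁽ⁱ⁾(t))^α ≤ Σ_{i=1}^d c_i Σ_{t∈(0,T]: Δξ⁽ⁱ⁾(t)>0} (Δξ⁽ⁱ⁾(t))^α + Σ_{i=1}^d c_i a_i^α, where Δf(t) = f(t) − f(t−). -/
open Set Filter

noncomputable section

/-- The jump cost `Σ_{t ∈ (0,T] : Δf(t) > 0} (Δf(t))^α`, where `Δf(t) = f(t) - f(t-)`. -/
def jumpCost (T α : ℝ) (f : ℝ → ℝ) : ℝ :=
  ∑' t : {t : ℝ // t ∈ Set.Ioc 0 T ∧ 0 < f t - Function.leftLim f t},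
    (f t.1 - Function.leftLim f t.1) ^ α

/-! Raising the input at `T` only enlarges the feasible regulator set. Conversely, a regulator
feasible for the raised input stays feasible for `ξ` once its value at `T` is lowered to its left
limit: the constraint at `T` is then the limit of the constraints before `T`, plus the nonnegative
jump of `ξ` at `T`. So both feasible sets have the same pointwise infima. For the jump cost, only the
jump at `T` changes, from `x` to `x + a`, and `(x + a) ^ α ≤ x ^ α + a ^ α` for `α ∈ [0, 1]`. -/

open Function Topology

lemma Filter.EventuallyEq.leftLim_eq {f g : ℝ → ℝ} {x : ℝ} (h : f =ᶠ[𝓝[<] x] g) (hx : f x = g x) :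
    leftLim f x = leftLim g x := by
  by_cases hf : ∃ y, Tendsto f (𝓝[<] x) (𝓝 y)
  · have hf' := tendsto_leftLim_of_tendsto hf
    rw [leftLim_eq_of_tendsto hf', leftLim_eq_of_tendsto (hf'.congr' h)]
  · have hg : ¬∃ y, Tendsto g (𝓝[<] x) (𝓝 y) := fun ⟨y, hy⟩ => hf ⟨y, hy.congr' h.symm⟩
    rw [leftLim_eq_of_not_tendsto f hf, leftLim_eq_of_not_tendsto g hg, hx]

lemma Cadlag.update_right_endpoint {T : ℝ} {f : ℝ → ℝ} (hf : Cadlag T f) (x : ℝ) :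
    Cadlag T (update f T x) := by
  refine ⟨fun t ht => ?_, fun t ht => ?_⟩
  · have hev : f =ᶠ[𝓝[≥] t] update f T x := by
      filter_upwards [nhdsWithin_le_nhds (Iio_mem_nhds ht.2)] with s hs
      exact (update_of_ne hs.ne _ _).symm
    rw [update_of_ne ht.2.ne]
    exact (hf.1 t ht).congr' hev
  · obtain ⟨L, hL⟩ := hf.2 t ht
    refine ⟨L, hL.congr' ?_⟩
    filter_upwards [self_mem_nhdsWithin] with s hs
    exact (update_of_ne (hs.trans_le ht.2).ne _ _).symm

section MonotoneOnIcc

variable {T : ℝ} {f : ℝ → ℝ}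

lemma MonotoneOn.le_leftLim (hf : MonotoneOn f (Icc 0 T))
    (hL : ∃ L, Tendsto f (𝓝[<] T) (𝓝 L)) {s : ℝ} (hs : s ∈ Icc 0 T) (hsT : s < T) :
    f s ≤ leftLim f T := by
  refine ge_of_tendsto (tendsto_leftLim_of_tendsto hL) ?_
  filter_upwards [Ioo_mem_nhdsLT hsT] with u hu
  exact hf hs ⟨hs.1.trans hu.1.le, hu.2.le⟩ hu.1.le

lemma MonotoneOn.update_leftLim_le (hT : 0 < T) (hf : MonotoneOn f (Icc 0 T))
    (hL : ∃ L, Tendsto f (𝓝[<] T) (𝓝 L)) (t : ℝ) : update f T (leftLim f T) t ≤ f t := by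
  rcases eq_or_ne t T with rfl | htT
  · rw [update_self]
    refine le_of_tendsto (tendsto_leftLim_of_tendsto hL) ?_
    filter_upwards [Ioo_mem_nhdsLT hT] with s hs
    exact hf ⟨hs.1.le, hs.2.le⟩ ⟨hT.le, le_rfl⟩ hs.2.le
  · rw [update_of_ne htT]

lemma MonotoneOn.update_leftLim (hf : MonotoneOn f (Icc 0 T))
    (hL : ∃ L, Tendsto f (𝓝[<] T) (𝓝 L)) :
    MonotoneOn (update f T (leftLim f T)) (Icc 0 T) := by
  intro s hs t ht hst
  rcases eq_or_ne t T with rfl | htT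
  · rcases eq_or_ne s t with rfl | hsT
    · exact le_rfl
    · rw [update_of_ne hsT, update_self]
      exact hf.le_leftLim hL hs (hst.lt_of_ne hsT)
  · have hsT : s ≠ T := (hst.trans_lt (ht.2.lt_of_ne htT)).ne
    rw [update_of_ne hsT, update_of_ne htT]
    exact hf hs ht hst

end MonotoneOnIcc

section Regulator

variable {T : ℝ} {d : ℕ} {Q : Matrix (Fin d) (Fin d) ℝ}

lemma regulator_eq_of_forall_feasible_exists_le {ξ ξ' : Fin d → ℝ → ℝ} {i : Fin d} {t : ℝ}
    (h : ∀ ζ, Feasible T Q ξ ζ → ∃ ζ', Feasible T Q ξ' ζ' ∧ ζ' i t ≤ ζ i t)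
    (h' : ∀ ζ', Feasible T Q ξ' ζ' → ∃ ζ, Feasible T Q ξ ζ ∧ ζ i t ≤ ζ' i t) :
    regulator T Q ξ i t = regulator T Q ξ' i t := by
  refine csInf_eq_csInf_of_forall_exists_le ?_ ?_
  · rintro _ ⟨ζ, hζ, rfl⟩
    obtain ⟨ζ', hζ', hle⟩ := h ζ hζ
    exact ⟨_, ⟨ζ', hζ', rfl⟩, hle⟩
  · rintro _ ⟨ζ', hζ', rfl⟩
    obtain ⟨ζ, hζ, hle⟩ := h' ζ' hζ'
    exact ⟨_, ⟨ζ, hζ, rfl⟩, hle⟩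

lemma Feasible.mono {ξ ξ' ζ : Fin d → ℝ → ℝ} (hζ : Feasible T Q ξ ζ)
    (h : ∀ t ∈ Icc 0 T, ∀ i, ξ i t ≤ ξ' i t) : Feasible T Q ξ' ζ :=
  ⟨hζ.1, fun t ht i => (hζ.2 t ht i).trans (by linarith [h t ht i])⟩

lemma Feasible.update_leftLim (hT : 0 < T) {ξ ξ' ζ : Fin d → ℝ → ℝ}
    (hζ : Feasible T Q ξ' ζ) (heq : ∀ t ∈ Ico 0 T, ∀ i, ξ' i t = ξ i t)
    (hξ : ∀ i, ∃ L, Tendsto (ξ i) (𝓝[<] T) (𝓝 L)) (hjump : ∀ i, leftLim (ξ i) T ≤ ξ i T) :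
    Feasible T Q ξ fun j => update (ζ j) T (leftLim (ζ j) T) := by
  have hζL : ∀ j, ∃ L, Tendsto (ζ j) (𝓝[<] T) (𝓝 L) := fun j => (hζ.1 j).1.2 T ⟨hT, le_rfl⟩
  refine ⟨fun j => ⟨(hζ.1 j).1.update_right_endpoint _, (hζ.1 j).2.1.update_leftLim (hζL j), ?_⟩,
    fun t ht i => ?_⟩
  · simpa only [update_of_ne hT.ne] using (hζ.1 j).2.2
  rcases eq_or_ne t T with rfl | htT
  · simp only [update_self]
    have hlim : Tendsto (fun s => ξ' i s + ∑ j, refMatrix Q i j * ζ j s) (𝓝[<] t)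
        (𝓝 (leftLim (ξ i) t + ∑ j, refMatrix Q i j * leftLim (ζ j) t)) := by
      refine Tendsto.add ((tendsto_leftLim_of_tendsto (hξ i)).congr' ?_)
        (tendsto_finsetSum _ fun j _ => (tendsto_leftLim_of_tendsto (hζL j)).const_mul _)
      filter_upwards [Ioo_mem_nhdsLT hT] with s hs
      exact (heq s ⟨hs.1.le, hs.2⟩ i).symm
    have hnonneg : 0 ≤ leftLim (ξ i) t + ∑ j, refMatrix Q i j * leftLim (ζ j) t := by
      refine ge_of_tendsto hlim ?_
      filter_upwards [Ioo_mem_nhdsLT hT] with s hs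
      exact hζ.2 s ⟨hs.1.le, hs.2.le⟩ i
    linarith [hjump i]
  · simp only [update_of_ne htT]
    rw [← heq t ⟨ht.1, ht.2.lt_of_ne htT⟩ i]
    exact hζ.2 t ht i

end Regulator

section JumpCost

variable {T α a : ℝ} {f : ℝ → ℝ}

lemma leftLim_add_ite_eq (hf : ∃ L, Tendsto f (𝓝[<] T) (𝓝 L)) {t : ℝ} (ht : t ≤ T) :
    leftLim (fun s => f s + if s = T then a else 0) t = leftLim f t := by
  have hev : f =ᶠ[𝓝[<] t] fun s => f s + if s = T then a else 0 := by
    filter_upwards [self_mem_nhdsWithin] with s hs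
    simp [(hs.trans_le ht).ne]
  rcases ht.lt_or_eq with htT | rfl
  · exact (hev.leftLim_eq (by simp [htT.ne])).symm
  · have hf' := tendsto_leftLim_of_tendsto hf
    rw [leftLim_eq_of_tendsto (hf'.congr' hev)]

lemma ite_rpow_add_le {x : ℝ} (ha : 0 ≤ a) (hα0 : 0 ≤ α) (hα1 : α ≤ 1) :
    (if 0 < x + a then (x + a) ^ α else 0) ≤ (if 0 < x then x ^ α else 0) + a ^ α := by
  have hx_rpow : 0 ≤ if 0 < x then x ^ α else 0 := by
    split_ifs with hx
    exacts [Real.rpow_nonneg hx.le α, le_rfl]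
  by_cases hxa : 0 < x + a
  · rw [if_pos hxa]
    by_cases hx : 0 < x
    · rw [if_pos hx]
      exact Real.rpow_add_le_add_rpow hx.le ha hα0 hα1
    · rw [if_neg hx, zero_add]
      exact Real.rpow_le_rpow hxa.le (by linarith) hα0
  · rw [if_neg hxa]
    exact add_nonneg hx_rpow (Real.rpow_nonneg ha α)

lemma jumpCost_eq_tsum_indicator (f : ℝ → ℝ) :
    jumpCost T α f = ∑' t, {t | t ∈ Ioc 0 T ∧ 0 < f t - leftLim f t}.indicator
      (fun t => (f t - leftLim f t) ^ α) t :=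
  tsum_subtype _ (fun t => (f t - leftLim f t) ^ α)

lemma summable_jumpCost_of_subsingleton
    (hf : {t | t ∈ Ioc 0 T ∧ leftLim f t ≠ f t}.Subsingleton) :
    Summable fun t : {t : ℝ // t ∈ Ioc 0 T ∧ 0 < f t - leftLim f t} =>
      (f t - leftLim f t) ^ α := by
  have : Finite {t : ℝ // t ∈ Ioc 0 T ∧ 0 < f t - leftLim f t} :=
    (hf.anti fun t ht => ⟨ht.1, (sub_pos.1 ht.2).ne⟩).finite.to_subtype
  exact .of_finite

lemma jumpCost_add_ite_le (hα0 : 0 ≤ α) (hα1 : α ≤ 1) (ha : 0 ≤ a)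
    (hf : ∃ L, Tendsto f (𝓝[<] T) (𝓝 L))
    (hsum : Summable fun t : {t : ℝ // t ∈ Ioc 0 T ∧ 0 < f t - leftLim f t} =>
      (f t - leftLim f t) ^ α) :
    jumpCost T α (fun t => f t + if t = T then a else 0) ≤ jumpCost T α f + a ^ α := by
  set g : ℝ → ℝ := fun t => f t + if t = T then a else 0
  have hΔ : ∀ t ∈ Ioc 0 T, g t - leftLim g t = (f t - leftLim f t) + if t = T then a else 0 := by
    intro t ht
    rw [leftLim_add_ite_eq hf ht.2]
    ring
  have hle : ∀ t, {t | t ∈ Ioc 0 T ∧ 0 < g t - leftLim g t}.indicator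
      (fun t => (g t - leftLim g t) ^ α) t ≤
      {t | t ∈ Ioc 0 T ∧ 0 < f t - leftLim f t}.indicator (fun t => (f t - leftLim f t) ^ α) t
        + if t = T then a ^ α else 0 := by
    intro t
    by_cases ht : t ∈ Ioc 0 T
    · simp only [indicator_apply, mem_ofPred_eq, ht, true_and, hΔ t ht]
      rcases eq_or_ne t T with rfl | htT
      · simpa only [if_true] using ite_rpow_add_le ha hα0 hα1
      · simp only [htT, if_false, add_zero, le_rfl]
    · rw [indicator_of_notMem (fun h => ht h.1), indicator_of_notMem (fun h => ht h.1), zero_add]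
      split_ifs
      exacts [Real.rpow_nonneg ha α, le_rfl]
  have hF : HasSum (fun t => {t | t ∈ Ioc 0 T ∧ 0 < f t - leftLim f t}.indicator
      (fun t => (f t - leftLim f t) ^ α) t + if t = T then a ^ α else 0)
      (jumpCost T α f + a ^ α) := by
    rw [jumpCost_eq_tsum_indicator]
    exact (summable_subtype_iff_indicator.mp hsum).hasSum.add (hasSum_ite_eq T (a ^ α))
  have hG_nonneg : ∀ t, 0 ≤ {t | t ∈ Ioc 0 T ∧ 0 < g t - leftLim g t}.indicator
      (fun t => (g t - leftLim g t) ^ α) t :=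
    indicator_nonneg fun t ht => Real.rpow_nonneg ht.2.le _
  rw [jumpCost_eq_tsum_indicator]
  exact hasSum_le hle (Summable.of_nonneg_of_le hG_nonneg hle hF.summable).hasSum hF

end JumpCost

theorem add_jump_at_T_general
    (T : ℝ) (hT : 0 < T) (d : ℕ)
    (Q : Matrix (Fin d) (Fin d) ℝ)
    (a : Fin d → ℝ) (ha : ∀ i, 0 ≤ a i)
    (ξ : Fin d → ℝ → ℝ) (hξ : ∀ i, Cadlag T (ξ i))
    (hpos : ∀ i, ∀ t ∈ Set.Ioc (0:ℝ) T, Function.leftLim (ξ i) t ≤ ξ i t)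
    (hone : ∀ i, {t | t ∈ Set.Ioc (0:ℝ) T ∧ Function.leftLim (ξ i) t ≠ ξ i t}.Subsingleton) :
    (∀ i, ∀ t ∈ Set.Icc (0:ℝ) T,
      regulator T Q (fun i t => ξ i t + if t = T then a i else 0) i t =
        regulator T Q ξ i t) ∧
    (∀ i, content T Q (fun i t => ξ i t + if t = T then a i else 0) i T =
        content T Q ξ i T + a i) ∧
    (∀ α : ℝ, α ∈ Set.Ioo (0:ℝ) 1 → ∀ c : Fin d → ℝ, (∀ i, 0 ≤ c i) →
      ∑ i, c i * jumpCost T α (fun t => ξ i t + if t = T then a i else 0) ≤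
        ∑ i, c i * jumpCost T α (ξ i) + ∑ i, c i * a i ^ α) := by
  have hTmem : T ∈ Ioc 0 T := ⟨hT, le_rfl⟩
  have hξL : ∀ i, ∃ L, Tendsto (ξ i) (𝓝[<] T) (𝓝 L) := fun i => (hξ i).2 T hTmem
  have hraise : ∀ t ∈ Icc 0 T, ∀ i, ξ i t ≤ ξ i t + if t = T then a i else 0 :=
    fun t _ i => le_add_of_nonneg_right (by split_ifs <;> simp [ha])
  have hreg : ∀ i t, regulator T Q (fun i t => ξ i t + if t = T then a i else 0) i t =
      regulator T Q ξ i t := fun i t =>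
    regulator_eq_of_forall_feasible_exists_le
      (fun ζ hζ => ⟨_, hζ.update_leftLim hT (fun s hs j => by simp [hs.2.ne]) hξL
        (fun j => hpos j T hTmem), (hζ.1 i).2.1.update_leftLim_le hT ((hζ.1 i).1.2 T hTmem) t⟩)
      (fun ζ hζ => ⟨ζ, hζ.mono hraise, le_rfl⟩)
  refine ⟨fun i t _ => hreg i t, fun i => ?_, fun α hα c hc => ?_⟩
  · simp only [content, hreg, if_true]
    ring
  · rw [← Finset.sum_add_distrib]
    refine Finset.sum_le_sum fun i _ => ?_
    rw [← mul_add]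
    exact mul_le_mul_of_nonneg_left (jumpCost_add_ite_le hα.1.le hα.2.le (ha i) (hξL i)
      (summable_jumpCost_of_subsingleton (hone i))) (hc i)

/-- Adding a jump of size `aᵢ ≥ 0` at the terminal time `T` to a tuple of
càdlàg paths with nonnegative jumps and at most one discontinuity each does not change the
regulator, increases the terminal buffer content by exactly `a`, and increases the jump cost
by at most `Σᵢ cᵢ aᵢ^α`. -/
theorem add_jump_at_T
    (T : ℝ) (hT : 0 < T) (d : ℕ) (hd : 1 ≤ d)
    (Q : Matrix (Fin d) (Fin d) ℝ) (hQ : Substochastic Q)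
    (a : Fin d → ℝ) (ha : ∀ i, 0 ≤ a i)
    (ξ : Fin d → ℝ → ℝ) (hξ : ∀ i, Cadlag T (ξ i))
    (hpos : ∀ i, ∀ t ∈ Set.Ioc (0:ℝ) T, Function.leftLim (ξ i) t ≤ ξ i t)
    (hone : ∀ i, {t | t ∈ Set.Ioc (0:ℝ) T ∧ Function.leftLim (ξ i) t ≠ ξ i t}.Subsingleton) :
    (∀ i, ∀ t ∈ Set.Icc (0:ℝ) T,
      regulator T Q (fun i t => ξ i t + if t = T then a i else 0) i t =
        regulator T Q ξ i t) ∧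
    (∀ i, content T Q (fun i t => ξ i t + if t = T then a i else 0) i T =
        content T Q ξ i T + a i) ∧
    (∀ α : ℝ, α ∈ Set.Ioo (0:ℝ) 1 → ∀ c : Fin d → ℝ, (∀ i, 0 ≤ c i) →
      ∑ i, c i * jumpCost T α (fun t => ξ i t + if t = T then a i else 0) ≤
        ∑ i, c i * jumpCost T α (ξ i) + ∑ i, c i * a i ^ α) :=
  add_jump_at_T_general T hT d Q a ha ξ hξ hpos hone
end
end

section
/- (Extended contraction principle for Lipschitz maps.) Let (𝕏, d) and (𝕊, σ) be metric spaces, Φ : 𝕏 → 𝕊 a Lipschitz continuous map, (μ_n) a sequence of Borel probability measures on 𝕏, (a_n) positive reals tending to infinity, and I : 𝕏 → [0,∞]. Assume (μ_n) satisfies the extended large deviation bounds in 𝕏 with speed a_n and rate I. Define I'(y) = inf{ I(x) : x ∈ 𝕏, Φ(x) = y } for y ∈ 𝕊, and let ν_n = μ_n ∘ Φ⁻¹ be the pushforward measures on 𝕊. Then: for every open set G ⊆ 𝕊, liminf_n (1/a_n) log ν_n(G) ≥ −inf_{y∈G} I'(y); and for every closed set F ⊆ 𝕊, limsup_n (1/a_n)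 log ν_n(F) ≤ −sup_{ε>0} inf_{y∈F^ε} I'(y). -/
open Set Filter MeasureTheory Metric ENNReal

noncomputable section

/-- The normalized log-probability `a_n⁻¹ · log μ_n(A)` (with `log 0 = -∞`), as an `EReal`. -/
def logProbRate (a : ℕ → ℝ) (p : ℕ → ℝ≥0∞) : ℕ → EReal :=
  fun n => (((a n)⁻¹ : ℝ) : EReal) * ENNReal.log (p n)

/-- The extended-LDP lower bound: for every open `G`,
`liminf a_n⁻¹ log μ_n(G) ≥ - inf_{x ∈ G} I(x)`. -/
def ExtLDPLowerBound {X : Type*} [MetricSpace X] [MeasurableSpace X]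
    (μ : ℕ → Measure X) (a : ℕ → ℝ) (I : X → ℝ≥0∞) : Prop :=
  ∀ G : Set X, IsOpen G →
    -(⨅ x ∈ G, (I x : EReal)) ≤
      Filter.liminf (logProbRate a (fun n => μ n G)) Filter.atTop

/-- The extended-LDP upper bound: for every closed `F`,
`limsup a_n⁻¹ log μ_n(F) ≤ - sup_{ε > 0} inf_{x ∈ F^ε} I(x)`,
where `F^ε` is the closed `ε`-thickening of `F`. -/
def ExtLDPUpperBound {X : Type*} [MetricSpace X] [MeasurableSpace X]
    (μ : ℕ → Measure X) (a : ℕ → ℝ) (I : X → ℝ≥0∞) : Prop :=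
  ∀ F : Set X, IsClosed F →
    Filter.limsup (logProbRate a (fun n => μ n F)) Filter.atTop ≤
      -(⨆ (ε : ℝ) (_ : 0 < ε), ⨅ x ∈ Metric.cthickening ε F, (I x : EReal))

/-- The pushforward rate function `I'(y) = inf { I(x) : Φ(x) = y }` (equal to `+∞` when the
preimage of `y` is empty). -/
def pushRate {X S : Type*} (Φ : X → S) (I : X → ℝ≥0∞) : S → ℝ≥0∞ :=
  fun y => ⨅ (x : X) (_ : Φ x = y), I x

/-! Since `inf_{y ∈ B} I'(y) = inf_{x ∈ Φ⁻¹' B} I(x)` and `ν_n(B) = μ_n(Φ⁻¹' B)`, the lower bound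
for `G` is the one for the open set `Φ⁻¹' G`. For the upper bound, uniform continuity of `Φ`
gives for each `ε > 0` a `δ > 0` with `(Φ⁻¹' F)^δ ⊆ Φ⁻¹' (F^ε)`, hence
`inf_{F^ε} I' ≤ inf_{(Φ⁻¹' F)^δ} I`, and the bound for the closed set `Φ⁻¹' F` applies. -/

theorem EReal.coe_ennreal_iInf {ι : Sort*} (f : ι → ℝ≥0∞) :
    ((⨅ i, f i : ℝ≥0∞) : EReal) = ⨅ i, (f i : EReal) :=
  Monotone.map_iInf_of_continuousAt continuous_coe_ennreal_ereal.continuousAt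
    EReal.coe_ennreal_strictMono.monotone EReal.coe_ennreal_top

theorem UniformContinuous.exists_mapsTo_cthickening {α β : Type*} [PseudoMetricSpace α]
    [PseudoMetricSpace β] {f : α → β} (hf : UniformContinuous f) {ε : ℝ} (hε : 0 < ε) :
    ∃ δ > 0, ∀ s : Set α, MapsTo f (cthickening δ s) (cthickening ε (f '' s)) := by
  obtain ⟨δ, hδ, hfδ⟩ := Metric.uniformContinuous_iff.1 hf ε hε
  refine ⟨δ / 2, half_pos hδ, fun s x hx => ?_⟩
  obtain ⟨y, hys, hxy⟩ :=
    mem_thickening_iff.1 (cthickening_subset_thickening' hδ (half_lt_self hδ) s hx)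
  exact thickening_subset_cthickening ε _
    (mem_thickening_iff.2 ⟨f y, mem_image_of_mem f hys, hfδ hxy⟩)

theorem iInf_pushRate_eq {X S : Type*} (Φ : X → S) (I : X → ℝ≥0∞) (t : Set S) :
    ⨅ y ∈ t, (pushRate Φ I y : EReal) = ⨅ x ∈ Φ ⁻¹' t, (I x : EReal) := by
  simp only [pushRate, EReal.coe_ennreal_iInf]
  exact le_antisymm
    (le_iInf₂ fun x hx => iInf₂_le_of_le (Φ x) hx (iInf_le_of_le x (iInf_le _ rfl)))
    (le_iInf₂ fun _ hy => le_iInf₂ fun x hxy => iInf₂_le x (mem_preimage.2 (hxy ▸ hy)))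

theorem logProbRate_map {X S : Type*} [MeasurableSpace X] [MeasurableSpace S] {Φ : X → S}
    (hΦ : Measurable Φ) (μ : ℕ → Measure X) (a : ℕ → ℝ) {A : Set S} (hA : MeasurableSet A) :
    logProbRate a (fun n => (μ n).map Φ A) = logProbRate a (fun n => μ n (Φ ⁻¹' A)) := by
  simp only [Measure.map_apply hΦ hA]

section

variable {X S : Type*} [MetricSpace X] [MeasurableSpace X] [MetricSpace S] [MeasurableSpace S]
  {μ : ℕ → Measure X} {a : ℕ → ℝ} {I : X → ℝ≥0∞} {Φ : X → S}

theorem ExtLDPLowerBound.map [OpensMeasurableSpace X] [BorelSpace S]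
    (hlow : ExtLDPLowerBound μ a I) (hΦ : Continuous Φ) :
    ExtLDPLowerBound (fun n => (μ n).map Φ) a (pushRate Φ I) := fun G hG => by
  rw [logProbRate_map hΦ.measurable μ a hG.measurableSet, iInf_pushRate_eq]
  exact hlow _ (hG.preimage hΦ)

theorem ExtLDPUpperBound.map [OpensMeasurableSpace X] [BorelSpace S]
    (hup : ExtLDPUpperBound μ a I) (hΦ : UniformContinuous Φ) :
    ExtLDPUpperBound (fun n => (μ n).map Φ) a (pushRate Φ I) := fun F hF => by
  rw [logProbRate_map hΦ.continuous.measurable μ a hF.measurableSet]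
  refine (hup _ (hF.preimage hΦ.continuous)).trans (EReal.neg_le_neg_iff.2 ?_)
  refine iSup₂_le fun ε hε => ?_
  obtain ⟨δ, hδ, hmaps⟩ := hΦ.exists_mapsTo_cthickening hε
  have hsub : cthickening δ (Φ ⁻¹' F) ⊆ Φ ⁻¹' cthickening ε F := fun x hx =>
    cthickening_subset_of_subset ε (image_preimage_subset Φ F) (hmaps _ hx)
  rw [iInf_pushRate_eq]
  exact le_iSup₂_of_le δ hδ (biInf_mono hsub)

end

theorem extended_contraction_principle_general
    {X S : Type*} [MetricSpace X] [MeasurableSpace X] [BorelSpace X]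
    [MetricSpace S] [MeasurableSpace S] [BorelSpace S]
    (Φ : X → S) (L : NNReal) (hΦ : LipschitzWith L Φ)
    (μ : ℕ → Measure X)
    (a : ℕ → ℝ)
    (I : X → ℝ≥0∞)
    (hlow : ExtLDPLowerBound μ a I) (hup : ExtLDPUpperBound μ a I) :
    ExtLDPLowerBound (fun n => (μ n).map Φ) a (pushRate Φ I) ∧
    ExtLDPUpperBound (fun n => (μ n).map Φ) a (pushRate Φ I) :=
  ⟨hlow.map hΦ.continuous, hup.map hΦ.uniformContinuous⟩

/-- (Extended contraction principle for Lipschitz maps.) If `(μ_n)` satisfies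
the extended LDP bounds in `𝕏` with speed `a_n` and rate `I`, and `Φ : 𝕏 → 𝕊` is Lipschitz,
then the pushforward measures `ν_n = μ_n ∘ Φ⁻¹` satisfy the extended LDP bounds in `𝕊` with
speed `a_n` and rate `I'(y) = inf{I(x) : Φ(x) = y}`. -/
theorem extended_contraction_principle
    {X S : Type*} [MetricSpace X] [MeasurableSpace X] [BorelSpace X]
    [MetricSpace S] [MeasurableSpace S] [BorelSpace S]
    (Φ : X → S) (L : NNReal) (hΦ : LipschitzWith L Φ)
    (μ : ℕ → Measure X) (hprob : ∀ n, IsProbabilityMeasure (μ n))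
    (a : ℕ → ℝ) (ha : ∀ n, 0 < a n) (ha' : Filter.Tendsto a Filter.atTop Filter.atTop)
    (I : X → ℝ≥0∞)
    (hlow : ExtLDPLowerBound μ a I) (hup : ExtLDPUpperBound μ a I) :
    ExtLDPLowerBound (fun n => (μ n).map Φ) a (pushRate Φ I) ∧
    ExtLDPUpperBound (fun n => (μ n).map Φ) a (pushRate Φ I) :=
  extended_contraction_principle_general Φ L hΦ μ a I hlow hup
end
end
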